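/- Let R be a commutative ring and let ũ : Id(R) → Id_k(fgId(R)) be the bijection I ↦ ⟨u_R(I)⟩_k with inverse Λ ↦ u_R⁻¹(Λ). Then ũ preserves primary ideals in both directions: an ideal q of R is primary if and only if ũ(q) is a primary subtractive ideal of fgId(R). In particular, an ideal p of R is prime if and only if ũ(p) is a prime subtractive ideal of fgId(R). -/

import Mathlib

/-- The type of finitely generated ideals of a commutative ring `R`. -/
def FGIdeal (R : Type*) [CommRing R] : Type _ := {I : Ideal R // I.FG}

namespace FGIdeal

variable {R : Type*} [CommRing R]

instance : Zero (FGIdeal R) := ⟨⟨⊥, Submodule.fg_bot⟩⟩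

instance : One (FGIdeal R) := ⟨⟨1, ⟨{1}, by simp [Ideal.one_eq_top]⟩⟩⟩

instance : Add (FGIdeal R) :=
  ⟨fun I J => ⟨I.1 + J.1, by rw [Submodule.add_eq_sup]; exact Submodule.FG.sup I.2 J.2⟩⟩

instance : Mul (FGIdeal R) := ⟨fun I J => ⟨I.1 * J.1, Submodule.FG.mul I.2 J.2⟩⟩

instance : SMul ℕ (FGIdeal R) :=
  ⟨fun n I => ⟨n • I.1, by
    induction n with
    | zero => simpa using! Submodule.fg_bot
    | succ n ih => rw [succ_nsmul, Submodule.add_eq_sup]; exact Submodule.FG.sup ih I.2⟩⟩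

instance : Pow (FGIdeal R) ℕ := ⟨fun I n => ⟨I.1 ^ n, Submodule.FG.pow I.2 n⟩⟩

instance : NatCast (FGIdeal R) :=
  ⟨fun n => ⟨(n : Ideal R), by
    induction n with
    | zero => simpa using! Submodule.fg_bot
    | succ n ih =>
        rw [Nat.cast_succ, Submodule.add_eq_sup]
        exact Submodule.FG.sup ih ⟨{1}, by simp [Ideal.one_eq_top]⟩⟩⟩

instance : CommSemiring (FGIdeal R) :=
  Subtype.val_injective.commSemiring (fun I : FGIdeal R => I.1) rfl rfl
    (fun _ _ => rfl) (fun _ _ => rfl) (fun _ _ => rfl) (fun _ _ => rfl) (fun _ => rfl)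

end FGIdeal

variable {R : Type*} [CommRing R]

/-- The universal integral seminorm `u_R : R → fgId(R)`, `a ↦ R·a`. -/
def uRfg (a : R) : FGIdeal R := ⟨Ideal.span {a}, Submodule.fg_span_singleton a⟩
section SemiringIdeals

variable {S : Type*} [CommSemiring S]

/-- A subset of a commutative semiring which is an ideal: it contains `0` and is closed
under addition and under multiplication by arbitrary elements. -/
def IsIdealSet (I : Set S) : Prop :=
  (0 : S) ∈ I ∧ (∀ a ∈ I, ∀ b ∈ I, a + b ∈ I) ∧ ∀ (c : S), ∀ a ∈ I, c * a ∈ I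

/-- A subset `I` is subtractive if `a + b ∈ I` and `a ∈ I` imply `b ∈ I`. -/
def IsSubtractiveSet (I : Set S) : Prop :=
  ∀ a b : S, a + b ∈ I → a ∈ I → b ∈ I

/-- A `k`-ideal (subtractive ideal) of a commutative semiring. -/
def IsKIdeal (I : Set S) : Prop := IsIdealSet I ∧ IsSubtractiveSet I

/-- The smallest subtractive ideal containing a subset `X`. -/
def kClosure (X : Set S) : Set S := ⋂₀ {J : Set S | IsKIdeal J ∧ X ⊆ J}

/-- The smallest ideal containing a subset `X`. -/
def idealGen (X : Set S) : Set S := ⋂₀ {J : Set S | IsIdealSet J ∧ X ⊆ J}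

/-- An ideal of a commutative semiring is prime when its complement is multiplicatively
closed: `1 ∉ I` and `a * b ∈ I` implies `a ∈ I` or `b ∈ I`. -/
def IsPrimeSet (I : Set S) : Prop :=
  (1 : S) ∉ I ∧ ∀ a b : S, a * b ∈ I → a ∈ I ∨ b ∈ I

end SemiringIdeals

/-- The map `Id(R) → Id_k(fgId(R))`, `I ↦ ⟨u_R(I)⟩_k`. -/
def uRtilde {R : Type*} [CommRing R] (I : Ideal R) : Set (FGIdeal R) :=
  kClosure (uRfg '' (I : Set R))

/-- An ideal of a commutative semiring (or ring) is primary if `a * b ∈ I` and `a ∉ I`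
imply `b ^ n ∈ I` for some integer `n ≥ 1`. -/
def IsPrimarySet {S : Type*} [CommSemiring S] (I : Set S) : Prop :=
  ∀ a b : S, a * b ∈ I → a ∉ I → ∃ n : ℕ, 1 ≤ n ∧ b ^ n ∈ I

/-! A subtractive ideal of `fgId(R)` containing `u_R(q)` contains every finitely generated
`J ≤ q`, because `J` is a finite sum of principal ideals; hence `ũ(q) = {J | J ≤ q}` and
`u_R⁻¹(ũ(q)) = q`. As `u_R` is multiplicative, pulling back along it preserves primary and
prime ideals. Conversely, if `A * B ≤ q` and `a ∈ A \ q`, then `B ≤ √q` because `q` is primary,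
and as `B` is finitely generated some power `B ^ n` already lies in `q`. -/

namespace FGIdeal

def valHom : FGIdeal R →+* Ideal R where
  toFun I := I.1
  map_zero' := rfl
  map_one' := rfl
  map_add' _ _ := rfl
  map_mul' _ _ := rfl

lemma val_pow (I : FGIdeal R) (n : ℕ) : (I ^ n).1 = I.1 ^ n :=
  map_pow valHom I n

lemma mem_of_val_le {T : Set (FGIdeal R)} (hT : IsIdealSet T) {q : Ideal R}
    (hq : ∀ a ∈ q, uRfg a ∈ T) (J : FGIdeal R) (hJ : J.1 ≤ q) : J ∈ T := by
  obtain ⟨J, hfg⟩ := J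
  induction J, hfg using Submodule.fg_induction with
  | singleton x => exact hq x ((Submodule.span_singleton_le_iff_mem x q).mp hJ)
  | sup N₁ N₂ hN₁ hN₂ ih₁ ih₂ =>
    have hsum : (show FGIdeal R from ⟨N₁, hN₁⟩) + ⟨N₂, hN₂⟩ = ⟨N₁ ⊔ N₂, hN₁.sup hN₂⟩ :=
      Subtype.ext (Submodule.add_eq_sup N₁ N₂)
    exact hsum ▸ hT.2.1 _ (ih₁ (le_sup_left.trans hJ)) _ (ih₂ (le_sup_right.trans hJ))

lemma isKIdeal_setOf_val_le (q : Ideal R) : IsKIdeal {J : FGIdeal R | J.1 ≤ q} :=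
  ⟨⟨(bot_le : ⊥ ≤ q), fun I hI J hJ => (sup_le hI hJ : (I + J).1 ≤ q),
      fun c I (hI : I.1 ≤ q) => (Ideal.mul_le_right.trans hI : (c * I).1 ≤ q)⟩,
    fun _ J hIJ _ => (le_sup_right.trans hIJ : J.1 ≤ q)⟩

end FGIdeal

def uRfgHom : R →* FGIdeal R where
  toFun := uRfg
  map_one' := Subtype.ext (Ideal.span_singleton_one.trans Ideal.one_eq_top.symm)
  map_mul' a b := Subtype.ext (Ideal.span_singleton_mul_span_singleton a b).symm

@[simp]
lemma coe_uRfgHom : ⇑(uRfgHom : R →* FGIdeal R) = uRfg := rfl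

lemma uRtilde_eq_setOf_val_le (q : Ideal R) : uRtilde q = {J : FGIdeal R | J.1 ≤ q} := by
  refine le_antisymm (Set.sInter_subset_of_mem ⟨FGIdeal.isKIdeal_setOf_val_le q, ?_⟩) ?_
  · rintro _ ⟨a, ha, rfl⟩
    exact (Submodule.span_singleton_le_iff_mem a q).mpr ha
  · rintro J hJ T ⟨hT, hqT⟩
    exact FGIdeal.mem_of_val_le hT.1 (fun a ha => hqT ⟨a, ha, rfl⟩) J hJ

lemma mem_uRtilde {q : Ideal R} {J : FGIdeal R} : J ∈ uRtilde q ↔ J.1 ≤ q := by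
  rw [uRtilde_eq_setOf_val_le]
  rfl

lemma isKIdeal_uRtilde (q : Ideal R) : IsKIdeal (uRtilde q) := by
  rw [uRtilde_eq_setOf_val_le]
  exact FGIdeal.isKIdeal_setOf_val_le q

@[simp]
lemma preimage_uRfg_uRtilde (q : Ideal R) : uRfg ⁻¹' uRtilde q = q := by
  ext a
  exact mem_uRtilde.trans (Submodule.span_singleton_le_iff_mem a q)

section Preimage

variable {S T : Type*} [CommSemiring S] [CommSemiring T]

lemma IsPrimarySet.preimage {I : Set T} (hI : IsPrimarySet I) (f : S →* T) :
    IsPrimarySet (f ⁻¹' I) := by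
  intro a b hab ha
  obtain ⟨n, hn, hbn⟩ := hI (f a) (f b) (by simpa using hab) ha
  exact ⟨n, hn, by simpa using hbn⟩

lemma IsPrimeSet.preimage {I : Set T} (hI : IsPrimeSet I) (f : S →* T) :
    IsPrimeSet (f ⁻¹' I) :=
  ⟨by simpa using hI.1, fun a b hab => hI.2 (f a) (f b) (by simpa using hab)⟩

end Preimage

lemma IsPrimarySet.of_uRtilde {q : Ideal R} (h : IsPrimarySet (uRtilde q)) :
    IsPrimarySet (q : Set R) := by
  simpa using h.preimage uRfgHom

lemma IsPrimeSet.of_uRtilde {p : Ideal R} (h : IsPrimeSet (uRtilde p)) :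
    IsPrimeSet (p : Set R) := by
  simpa using h.preimage uRfgHom

lemma isPrimeSet_iff_isPrime (p : Ideal R) : IsPrimeSet (p : Set R) ↔ p.IsPrime :=
  ⟨fun hp => ⟨(Ideal.ne_top_iff_one p).mpr hp.1, fun {a b} => hp.2 a b⟩,
    fun hp => ⟨(Ideal.ne_top_iff_one p).mp hp.ne_top, fun _ _ => hp.mem_or_mem⟩⟩

lemma IsPrimarySet.exists_pow_le_of_mul_le {q A B : Ideal R} (hq : IsPrimarySet (q : Set R))
    (hAB : A * B ≤ q) (hA : ¬A ≤ q) (hB : B.FG) : ∃ n, 1 ≤ n ∧ B ^ n ≤ q := by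
  obtain ⟨a, haA, haq⟩ := Set.not_subset.mp hA
  have hrad : B ≤ q.radical := fun b hb =>
    let ⟨n, _, hn⟩ := hq a b (hAB (Ideal.mul_mem_mul haA hb)) haq
    ⟨n, hn⟩
  obtain ⟨n, hn⟩ := Ideal.exists_pow_le_of_le_radical_of_fg hrad hB
  exact ⟨n + 1, Nat.le_add_left 1 n, (Ideal.pow_le_pow_right n.le_succ).trans hn⟩

lemma IsPrimarySet.uRtilde {q : Ideal R} (hq : IsPrimarySet (q : Set R)) :
    IsPrimarySet (uRtilde q) := by
  intro A B hAB hA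
  rw [mem_uRtilde] at hAB hA
  obtain ⟨n, hn, hBn⟩ := hq.exists_pow_le_of_mul_le hAB hA B.2
  exact ⟨n, hn, mem_uRtilde.mpr ((B.val_pow n).symm ▸ hBn)⟩

lemma IsPrimeSet.uRtilde {p : Ideal R} (hp : IsPrimeSet (p : Set R)) :
    IsPrimeSet (uRtilde p) := by
  rw [isPrimeSet_iff_isPrime] at hp
  refine ⟨fun h1 => (Ideal.ne_top_iff_one p).mp hp.ne_top
    (Submodule.one_le.mp (mem_uRtilde.mp h1)), fun A B hAB => ?_⟩
  simp only [mem_uRtilde]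
  exact hp.mul_le.mp (mem_uRtilde.mp hAB)

/-- The bijection `ũ : Id(R) → Id_k(fgId(R))`, `q ↦ ⟨u_R(q)⟩_k`,
preserves primary ideals in both directions; in particular it preserves prime ideals in
both directions. -/
theorem uRtilde_preserves_primary_and_prime (R : Type*) [CommRing R] :
    (∀ q : Ideal R, IsKIdeal (uRtilde q)) ∧
    (∀ q : Ideal R, IsPrimarySet (q : Set R) ↔ IsPrimarySet (uRtilde q)) ∧
    (∀ p : Ideal R, IsPrimeSet (p : Set R) ↔ IsPrimeSet (uRtilde p)) :=
  ⟨isKIdeal_uRtilde, fun _ => ⟨IsPrimarySet.uRtilde, IsPrimarySet.of_uRtilde⟩,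
    fun _ => ⟨IsPrimeSet.uRtilde, IsPrimeSet.of_uRtilde⟩⟩
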